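/- arXiv:math/9912248 — 6 statements merged into one kernel-verified Lean document; each statement's English description precedes it below -/
import Mathlib

section
/- Let c1,...,ck be elements of a group such that consecutive elements satisfy the braid relation and non-consecutive elements commute. Then (c1 c2 ... ck)^{k+1} = (c1 c2 ... c_{k-1})^k (c_k c_{k-1} ... c2 c1^2 c2 ... c_{k-1} c_k), and moreover the element (c_k c_{k-1} ... c2 c1^2 c2 ... c_{k-1} c_k) commutes with (c1 c2 ... c_{k-1})^k. -/
namespace BraidAux

variable {G : Type*} [Group G]

/-- ascending product `c 1 * c 2 * ⋯ * c n`. -/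
def Dp (c : ℕ → G) (n : ℕ) : G := ((List.range n).map (fun i => c (i + 1))).prod

/-- descending product `c t * c (t-1) * ⋯ * c (t-m+1)` (m factors). -/
def Ep (c : ℕ → G) (t m : ℕ) : G := ((List.range m).map (fun i => c (t - i))).prod

lemma Dp_zero (c : ℕ → G) : Dp c 0 = 1 := rfl

lemma Dp_succ (c : ℕ → G) (n : ℕ) : Dp c (n + 1) = Dp c n * c (n + 1) := by
  simp [Dp, List.range_succ]

lemma Ep_zero (c : ℕ → G) (t : ℕ) : Ep c t 0 = 1 := rfl

lemma Ep_succ (c : ℕ → G) (t m : ℕ) : Ep c t (m + 1) = Ep c t m * c (t - m) := by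
  simp [Ep, List.range_succ]

lemma Ep_succ' (c : ℕ → G) (t m : ℕ) : Ep c t (m + 1) = c t * Ep c (t - 1) m := by
  have h : (fun i => c (t - (i + 1))) = fun i : ℕ => c (t - 1 - i) := by
    funext i; congr 1; omega
  simp [Ep, List.range_succ_eq_map, List.map_map, Function.comp_def, h]

section

variable {k : ℕ} {c : ℕ → G}
variable (hbraid : ∀ i, 1 ≤ i → i + 1 ≤ k →
      c i * c (i + 1) * c i = c (i + 1) * c i * c (i + 1))
variable (hcomm : ∀ i j, 1 ≤ i → j ≤ k → i + 1 < j → Commute (c i) (c j))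

include hcomm in
lemma commD (m j : ℕ) (hj : j ≤ k) (hm : m + 2 ≤ j) : Commute (c j) (Dp c m) := by
  induction m with
  | zero => exact Commute.one_right _
  | succ n ih =>
      rw [Dp_succ]
      exact (ih (by omega)).mul_right ((hcomm (n + 1) j (by omega) hj (by omega)).symm)

include hcomm in
lemma commE (t m j : ℕ) (hj : j ≤ k) (hm : m ≤ t) (ht : t + 2 ≤ j) :
    Commute (c j) (Ep c t m) := by
  induction m with
  | zero => exact Commute.one_right _
  | succ n ih =>
      rw [Ep_succ]
      exact (ih (by omega)).mul_right ((hcomm (t - n) j (by omega) hj (by omega)).symm)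

include hbraid hcomm in
lemma shiftD : ∀ n, n ≤ k → ∀ i, 1 ≤ i → i + 1 ≤ n → Dp c n * c i = c (i + 1) * Dp c n := by
  intro n
  induction n with
  | zero => intro _ i hi hin; omega
  | succ n ih =>
      intro hn i hi hin
      rcases Nat.lt_or_ge (i + 1) (n + 1) with h | h
      · rw [Dp_succ, mul_assoc, ← (hcomm i (n + 1) hi hn (by omega)).eq,
          ← mul_assoc, ih (by omega) i hi (by omega), mul_assoc]
      · have hin' : i = n := by omega
        subst hin'
        obtain ⟨e, rfl⟩ : ∃ e, i = e + 1 := ⟨i - 1, by omega⟩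
        have hD : Dp c (e + 1 + 1) = Dp c e * c (e + 1) * c (e + 2) := by
          rw [Dp_succ, Dp_succ]
        have hcd : Commute (c (e + 2)) (Dp c e) := commD hcomm e (e + 2) (by omega) (by omega)
        calc Dp c (e + 1 + 1) * c (e + 1)
            = Dp c e * (c (e + 1) * c (e + 2) * c (e + 1)) := by
              rw [hD]; group
          _ = Dp c e * (c (e + 2) * c (e + 1) * c (e + 2)) := by
              rw [hbraid (e + 1) (by omega) (by omega)]
          _ = Dp c e * c (e + 2) * (c (e + 1) * c (e + 2)) := by group
          _ = c (e + 2) * Dp c e * (c (e + 1) * c (e + 2)) := by rw [← hcd.eq]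
          _ = c (e + 1 + 1) * Dp c (e + 1 + 1) := by
              rw [hD]; group

include hbraid hcomm in
lemma shiftPowD : ∀ j i, 1 ≤ i → i + j ≤ k → Dp c k ^ j * c i = c (i + j) * Dp c k ^ j := by
  intro j
  induction j with
  | zero => intro i _ _; simp
  | succ j ih =>
      intro i hi hij
      have h1 : Dp c k * c i = c (i + 1) * Dp c k :=
        shiftD hbraid hcomm k le_rfl i hi (by omega)
      have h2 := ih (i + 1) (by omega) (by omega)
      calc Dp c k ^ (j + 1) * c i = Dp c k ^ j * (Dp c k * c i) := by
            rw [pow_succ]; group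
        _ = Dp c k ^ j * c (i + 1) * Dp c k := by rw [h1]; group
        _ = c (i + 1 + j) * Dp c k ^ j * Dp c k := by rw [h2]
        _ = c (i + (j + 1)) * Dp c k ^ (j + 1) := by
            rw [pow_succ, show i + 1 + j = i + (j + 1) by omega]; group

include hbraid hcomm in
lemma DsqD (m : ℕ) (hm : m + 2 ≤ k) :
    Dp c (m + 2) ^ 2 = Dp c (m + 1) ^ 2 * c (m + 2) * c (m + 1) := by
  have hcd : Commute (c (m + 2)) (Dp c m) := commD hcomm m (m + 2) hm (by omega)
  calc Dp c (m + 2) ^ 2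
      = Dp c (m + 1) * (c (m + 2) * Dp c m) * c (m + 1) * c (m + 2) := by
        rw [sq, Dp_succ, Dp_succ c m]; group
    _ = Dp c (m + 1) * Dp c m * (c (m + 2) * c (m + 1) * c (m + 2)) := by
        rw [hcd.eq]; group
    _ = Dp c (m + 1) * Dp c m * (c (m + 1) * c (m + 2) * c (m + 1)) := by
        rw [hbraid (m + 1) (by omega) hm]
    _ = Dp c (m + 1) ^ 2 * c (m + 2) * c (m + 1) := by
        rw [sq, Dp_succ c m]; group

include hbraid hcomm in
lemma LtwoD : ∀ m, m + 1 ≤ k → Dp c (m + 1) ^ 2 * c (m + 1) = c 1 * Dp c (m + 1) ^ 2 := by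
  intro m
  induction m with
  | zero =>
      intro _
      have : Dp c 1 = c 1 := by rw [Dp_succ, Dp_zero, one_mul]
      rw [this, sq]; group
  | succ m ih =>
      intro hm
      have hsq := DsqD hbraid hcomm m hm
      calc Dp c (m + 2) ^ 2 * c (m + 2)
          = Dp c (m + 1) ^ 2 * (c (m + 2) * c (m + 1) * c (m + 2)) := by
            rw [hsq]; group
        _ = Dp c (m + 1) ^ 2 * (c (m + 1) * c (m + 2) * c (m + 1)) := by
            rw [hbraid (m + 1) (by omega) hm]
        _ = Dp c (m + 1) ^ 2 * c (m + 1) * (c (m + 2) * c (m + 1)) := by group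
        _ = c 1 * (Dp c (m + 1) ^ 2 * c (m + 2) * c (m + 1)) := by
            rw [ih (by omega)]; group
        _ = c 1 * Dp c (m + 2) ^ 2 := by rw [hsq]

include hbraid hcomm in
lemma centralD (hk : 1 ≤ k) (i : ℕ) (hi : 1 ≤ i) (hik : i ≤ k) :
    Commute (c i) (Dp c k ^ (k + 1)) := by
  obtain ⟨e, rfl⟩ : ∃ e, i = e + 1 := ⟨i - 1, by omega⟩
  obtain ⟨f, hf⟩ : ∃ f, k = e + 1 + f := ⟨k - (e + 1), by omega⟩
  have h1 : Dp c k ^ f * c (e + 1) = c k * Dp c k ^ f := by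
    rw [shiftPowD hbraid hcomm f (e + 1) (by omega) (by omega), ← hf]
  have h2 : Dp c k ^ 2 * c k = c 1 * Dp c k ^ 2 := by
    have := LtwoD hbraid hcomm (k - 1) (by omega)
    rwa [show k - 1 + 1 = k by omega] at this
  have h3 : Dp c k ^ e * c 1 = c (e + 1) * Dp c k ^ e := by
    rcases Nat.eq_zero_or_pos e with he | he
    · subst he; simp
    · rw [shiftPowD hbraid hcomm e 1 le_rfl (by omega), show 1 + e = e + 1 by omega]
  have hpow : Dp c k ^ (k + 1) = Dp c k ^ e * Dp c k ^ 2 * Dp c k ^ f := by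
    rw [← pow_add, ← pow_add]; congr 1; omega
  unfold Commute SemiconjBy
  calc c (e + 1) * Dp c k ^ (k + 1)
      = (c (e + 1) * Dp c k ^ e) * Dp c k ^ 2 * Dp c k ^ f := by rw [hpow]; group
    _ = Dp c k ^ e * (c 1 * Dp c k ^ 2) * Dp c k ^ f := by rw [← h3]; group
    _ = Dp c k ^ e * Dp c k ^ 2 * (c k * Dp c k ^ f) := by rw [← h2]; group
    _ = Dp c k ^ e * Dp c k ^ 2 * Dp c k ^ f * c (e + 1) := by rw [← h1]; group
    _ = Dp c k ^ (k + 1) * c (e + 1) := by rw [hpow]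

include hbraid hcomm in
lemma EshiftD : ∀ m s, m ≤ s → s + 2 ≤ k →
    Ep c (s + 1) m * Dp c (k - 1) = Dp c (k - 1) * Ep c s m := by
  intro m
  induction m with
  | zero => intro s _ _; rw [Ep_zero, Ep_zero, one_mul, mul_one]
  | succ m ih =>
      intro s hms hsk
      have hlet : Dp c (k - 1) * c (s - m) = c (s - m + 1) * Dp c (k - 1) :=
        shiftD hbraid hcomm (k - 1) (by omega) (s - m) (by omega) (by omega)
      have harr : s + 1 - m = s - m + 1 := by omega
      calc Ep c (s + 1) (m + 1) * Dp c (k - 1)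
          = Ep c (s + 1) m * (c (s - m + 1) * Dp c (k - 1)) := by
            rw [Ep_succ, harr]; group
        _ = Ep c (s + 1) m * Dp c (k - 1) * c (s - m) := by rw [← hlet]; group
        _ = Dp c (k - 1) * (Ep c s m * c (s - m)) := by
            rw [ih s (by omega) hsk]; group
        _ = Dp c (k - 1) * Ep c s (m + 1) := by rw [Ep_succ]

include hbraid hcomm in
lemma keyD (j : ℕ) (hj : j + 2 ≤ k) :
    Ep c k (j + 1) * (Dp c (k - 1) * c k) = Dp c (k - 1) * Ep c k (j + 2) := by
  have hE1 : Ep c k (j + 1) = c k * Ep c (k - 1) j := Ep_succ' c k j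
  have hE2 : Ep c k (j + 2) = c k * (c (k - 1) * Ep c (k - 2) j) := by
    rw [Ep_succ' c k (j + 1), Ep_succ' c (k - 1) j, show k - 1 - 1 = k - 2 by omega]
  have hEs : Ep c (k - 1) j * Dp c (k - 1) = Dp c (k - 1) * Ep c (k - 2) j := by
    have := EshiftD hbraid hcomm j (k - 2) (by omega) (by omega)
    rwa [show k - 2 + 1 = k - 1 by omega] at this
  have hce : Commute (c k) (Ep c (k - 2) j) :=
    commE hcomm (k - 2) j k le_rfl (by omega) (by omega)
  have hcd : Commute (c k) (Dp c (k - 2)) := commD hcomm (k - 2) k le_rfl (by omega)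
  have hDk1 : Dp c (k - 1) = Dp c (k - 2) * c (k - 1) := by
    rw [show k - 1 = (k - 2) + 1 by omega, Dp_succ, show k - 2 + 1 = k - 1 by omega]
  have hbr : c (k - 1) * c k * c (k - 1) = c k * c (k - 1) * c k := by
    have := hbraid (k - 1) (by omega) (by omega)
    rwa [show k - 1 + 1 = k by omega] at this
  calc Ep c k (j + 1) * (Dp c (k - 1) * c k)
      = c k * (Ep c (k - 1) j * Dp c (k - 1)) * c k := by rw [hE1]; group
    _ = c k * Dp c (k - 1) * (Ep c (k - 2) j * c k) := by rw [hEs]; group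
    _ = c k * Dp c (k - 1) * c k * Ep c (k - 2) j := by rw [← hce.eq]; group
    _ = (c k * Dp c (k - 2)) * (c (k - 1) * c k) * Ep c (k - 2) j := by
        rw [hDk1]; group
    _ = Dp c (k - 2) * (c k * c (k - 1) * c k) * Ep c (k - 2) j := by
        rw [hcd.eq]; group
    _ = Dp c (k - 2) * (c (k - 1) * c k * c (k - 1)) * Ep c (k - 2) j := by
        rw [hbr]
    _ = Dp c (k - 1) * Ep c k (j + 2) := by rw [hDk1, hE2]; group

include hbraid hcomm in
lemma FD (hk : 1 ≤ k) : ∀ j, j + 1 ≤ k →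
    Dp c k ^ (j + 1) = Dp c (k - 1) ^ (j + 1) * Ep c k (j + 1) := by
  have hDk : Dp c k = Dp c (k - 1) * c k := by
    rw [show k = (k - 1) + 1 by omega, Dp_succ, show k - 1 + 1 = k by omega]
  intro j
  induction j with
  | zero =>
      intro _
      rw [pow_one, pow_one, hDk]
      congr 1
      rw [show (1 : ℕ) = 0 + 1 from rfl, Ep_succ, Ep_zero, one_mul, Nat.sub_zero]
  | succ j ih =>
      intro hj
      calc Dp c k ^ (j + 2)
          = Dp c k ^ (j + 1) * Dp c k := by rw [pow_succ]
        _ = Dp c (k - 1) ^ (j + 1) * (Ep c k (j + 1) * (Dp c (k - 1) * c k)) := by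
            rw [ih (by omega), hDk]; group
        _ = Dp c (k - 1) ^ (j + 1) * (Dp c (k - 1) * Ep c k (j + 2)) := by
            rw [keyD hbraid hcomm j hj]
        _ = Dp c (k - 1) ^ (j + 2) * Ep c k (j + 2) := by rw [pow_succ]; group

lemma commDall (m : ℕ) (x : G) (h : ∀ i, 1 ≤ i → i ≤ m → Commute (c i) x) :
    Commute (Dp c m) x := by
  induction m with
  | zero => exact Commute.one_left _
  | succ n ih =>
      rw [Dp_succ]
      exact (ih (fun i h1 h2 => h i h1 (by omega))).mul_left (h (n + 1) (by omega) le_rfl)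

end

end BraidAux

open BraidAux in
/-- Lemma 2.2(v): `(c1 ⋯ ck)^{k+1} = (c1 ⋯ c_{k-1})^k (ck ⋯ c2 c1² c2 ⋯ ck)`,
and the second factor commutes with `(c1 ⋯ c_{k-1})^k`. -/
theorem stmt_1 {G : Type*} [Group G] (k : ℕ) (hk : 2 ≤ k) (c : ℕ → G)
    (hbraid : ∀ i, 1 ≤ i → i + 1 ≤ k →
      c i * c (i + 1) * c i = c (i + 1) * c i * c (i + 1))
    (hcomm : ∀ i j, 1 ≤ i → j ≤ k → i + 1 < j → Commute (c i) (c j)) :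
    ((List.range k).map (fun i => c (i + 1))).prod ^ (k + 1)
      = ((List.range (k - 1)).map (fun i => c (i + 1))).prod ^ k
        * (((List.range (k - 1)).map (fun i => c (k - i))).prod * c 1 ^ 2
            * ((List.range (k - 1)).map (fun i => c (i + 2))).prod)
    ∧ Commute
        (((List.range (k - 1)).map (fun i => c (k - i))).prod * c 1 ^ 2
            * ((List.range (k - 1)).map (fun i => c (i + 2))).prod)
        (((List.range (k - 1)).map (fun i => c (i + 1))).prod ^ k) := by
  have hT : Dp c k = c 1 * ((List.range (k - 1)).map (fun i => c (i + 2))).prod := by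
    conv_lhs => rw [Dp, show k = (k - 1) + 1 by omega]
    rw [List.range_succ_eq_map, List.map_cons, List.prod_cons, List.map_map]
    rfl
  have hEkk : Ep c k k = ((List.range (k - 1)).map (fun i => c (k - i))).prod * c 1 := by
    conv_lhs => rw [show k = (k - 1) + 1 by omega]
    rw [Ep_succ, show k - 1 + 1 = k by omega, show k - (k - 1) = 1 by omega]
    rfl
  -- A = Ep c k k * Dp c k
  have hA : ((List.range (k - 1)).map (fun i => c (k - i))).prod * c 1 ^ 2
      * ((List.range (k - 1)).map (fun i => c (i + 2))).prod = Ep c k k * Dp c k := by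
    rw [hEkk, hT, sq]; group
  have hmain : Dp c k ^ (k + 1) = Dp c (k - 1) ^ k * (Ep c k k * Dp c k) := by
    have hF := FD hbraid hcomm (by omega) (k - 1) (by omega)
    rw [show k - 1 + 1 = k by omega] at hF
    rw [pow_succ, hF]; group
  have hcent : Commute (Dp c (k - 1) ^ k) (Dp c k ^ (k + 1)) := by
    refine Commute.pow_left ?_ k
    exact commDall (k - 1) _ (fun i h1 h2 =>
      centralD hbraid hcomm (by omega) i h1 (by omega))
  have hcomm2 : Commute (Ep c k k * Dp c k) (Dp c (k - 1) ^ k) := by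
    have hinv : Ep c k k * Dp c k = (Dp c (k - 1) ^ k)⁻¹ * Dp c k ^ (k + 1) := by
      rw [hmain]; group
    rw [hinv]
    exact Commute.mul_left ((Commute.refl _).inv_left) hcent.symm
  refine ⟨?_, ?_⟩
  · rw [hA]
    exact hmain
  · rw [hA]
    exact hcomm2
end

section
/- Let c1,...,ck be elements of a group such that consecutive elements satisfy the braid relation and non-consecutive elements commute. Then for every integer s with 1 ≤ s ≤ k, (c1 c2 ... ck)^s = (c1 c2 ... c_{k-1})^s (c_k c_{k-1} ... c_{k-s+1}). -/
namespace Stmt2Aux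

variable {G : Type*} [Group G]

/-- `asc c a n = c a * c (a+1) * ⋯ * c (a+n-1)`. -/
def asc (c : ℕ → G) (a : ℕ) : ℕ → G
  | 0 => 1
  | n+1 => asc c a n * c (a+n)

/-- `desc c a n = c (a+n-1) * ⋯ * c (a+1) * c a`. -/
def desc (c : ℕ → G) (a : ℕ) : ℕ → G
  | 0 => 1
  | n+1 => c (a+n) * desc c a n

lemma commute_asc (c : ℕ → G) (x : G) (a n : ℕ)
    (h : ∀ i, a ≤ i → i < a+n → Commute x (c i)) : Commute x (asc c a n) := by
  induction n with
  | zero => simp [asc]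
  | succ n ih =>
    simp only [asc]
    exact (ih fun i h1 h2 => h i h1 (by omega)).mul_right (h (a+n) (by omega) (by omega))

lemma commute_desc (c : ℕ → G) (x : G) (a n : ℕ)
    (h : ∀ i, a ≤ i → i < a+n → Commute x (c i)) : Commute x (desc c a n) := by
  induction n with
  | zero => simp [desc]
  | succ n ih =>
    simp only [desc]
    exact (h (a+n) (by omega) (by omega)).mul_right (ih fun i h1 h2 => h i h1 (by omega))

lemma asc_split (c : ℕ → G) (a m n : ℕ) :
    asc c a (m + n) = asc c a m * asc c (a + m) n := by
  induction n with
  | zero => simp [asc]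
  | succ n ih =>
    show asc c a (m+n) * c (a + (m+n)) = asc c a m * (asc c (a+m) n * c ((a+m)+n))
    rw [ih, mul_assoc, Nat.add_assoc]

lemma desc_succ' (c : ℕ → G) (a n : ℕ) :
    desc c a (n+1) = desc c (a+1) n * c a := by
  induction n with
  | zero => simp [desc]
  | succ n ih =>
    show c (a+(n+1)) * desc c a (n+1) = (c ((a+1)+n) * desc c (a+1) n) * c a
    rw [ih, show (a+1)+n = a+(n+1) from by omega, mul_assoc]

section

variable (c : ℕ → G) (k : ℕ)
    (hbraid : ∀ i, 1 ≤ i → i + 1 ≤ k →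
      c i * c (i + 1) * c i = c (i + 1) * c i * c (i + 1))
    (hcomm : ∀ i j, 1 ≤ i → j ≤ k → i + 1 < j → Commute (c i) (c j))

include hbraid hcomm

lemma key : ∀ n a, 1 ≤ a → a + n ≤ k →
    desc c (a+1) n * asc c a (n+1) = asc c a n * desc c a (n+1) := by
  intro n
  induction n with
  | zero => intro a _ _; simp [asc, desc]
  | succ n ih =>
    intro a ha hk
    have ih' : desc c (a+1) n * (asc c a n * c (a+n)) = asc c a n * (c (a+n) * desc c a n) := by
      have := ih a ha (by omega)
      simpa [asc, desc, mul_assoc] using this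
    have hcA : Commute (c (a+n+1)) (asc c a n) :=
      commute_asc c _ a n fun i h1 h2 => (hcomm i (a+n+1) (by omega) (by omega) (by omega)).symm
    have hcD : Commute (c (a+n+1)) (desc c a n) :=
      commute_desc c _ a n fun i h1 h2 => (hcomm i (a+n+1) (by omega) (by omega) (by omega)).symm
    have hb : c (a+n) * c (a+n+1) * c (a+n) = c (a+n+1) * c (a+n) * c (a+n+1) :=
      hbraid (a+n) (by omega) (by omega)
    show (c ((a+1)+n) * desc c (a+1) n) * ((asc c a n * c (a+n)) * c (a+(n+1)))
        = (asc c a n * c (a+n)) * (c (a+(n+1)) * (c (a+n) * desc c a n))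
    rw [show (a+1)+n = a+n+1 from by omega, show a+(n+1) = a+n+1 from by omega]
    calc (c (a+n+1) * desc c (a+1) n) * ((asc c a n * c (a+n)) * c (a+n+1))
        = c (a+n+1) * (desc c (a+1) n * (asc c a n * c (a+n))) * c (a+n+1) := by
          simp only [mul_assoc]
      _ = c (a+n+1) * (asc c a n * (c (a+n) * desc c a n)) * c (a+n+1) := by rw [ih']
      _ = asc c a n * (c (a+n+1) * c (a+n) * (desc c a n * c (a+n+1))) := by
          rw [← mul_assoc, ← mul_assoc, hcA.eq]
          simp only [mul_assoc]
      _ = asc c a n * (c (a+n+1) * c (a+n) * (c (a+n+1) * desc c a n)) := by rw [hcD.eq]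
      _ = asc c a n * (c (a+n+1) * c (a+n) * c (a+n+1) * desc c a n) := by
          simp only [mul_assoc]
      _ = asc c a n * (c (a+n) * c (a+n+1) * c (a+n) * desc c a n) := by rw [← hb]
      _ = (asc c a n * c (a+n)) * (c (a+n+1) * (c (a+n) * desc c a n)) := by
          simp only [mul_assoc]

lemma step : ∀ s, 1 ≤ s → s + 1 ≤ k →
    desc c (k-s+1) s * (asc c 1 (k-1) * c k)
      = asc c 1 (k-1) * desc c (k-s) (s+1) := by
  intro s hs hsk
  have hQ : asc c 1 (k-1) = asc c 1 (k-1-s) * asc c (k-s) s := by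
    conv_lhs => rw [show k-1 = (k-1-s) + s from by omega]
    rw [asc_split, show 1 + (k-1-s) = k-s from by omega]
  have hT : Commute (desc c (k-s+1) s) (asc c 1 (k-1-s)) := by
    apply commute_asc c _ 1 (k-1-s) fun i h1 h2 => ?_
    exact (commute_desc c (c i) (k-s+1) s fun j hj1 hj2 =>
      (hcomm i j (by omega) (by omega) (by omega))).symm
  have hkey := key c k hbraid hcomm s (k-s) (by omega) (by omega)
  calc desc c ((k-s)+1) s * (asc c 1 (k-1) * c k)
      = desc c ((k-s)+1) s * (asc c 1 (k-1-s) * (asc c (k-s) s * c k)) := by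
        rw [hQ, mul_assoc]
    _ = asc c 1 (k-1-s) * (desc c ((k-s)+1) s * (asc c (k-s) s * c ((k-s)+s))) := by
        rw [← mul_assoc, hT.eq, mul_assoc, show (k-s)+s = k from by omega]
    _ = asc c 1 (k-1-s) * (desc c ((k-s)+1) s * asc c (k-s) (s+1)) := by
        rw [show asc c (k-s) (s+1) = asc c (k-s) s * c ((k-s)+s) from rfl]
    _ = asc c 1 (k-1-s) * (asc c (k-s) s * desc c (k-s) (s+1)) := by rw [hkey]
    _ = asc c 1 (k-1) * desc c (k-s) (s+1) := by rw [hQ, mul_assoc]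

lemma main : ∀ s, 1 ≤ s → s ≤ k →
    asc c 1 k ^ s = asc c 1 (k-1) ^ s * desc c (k-s+1) s := by
  intro s
  induction s with
  | zero => omega
  | succ s ih =>
    intro _ hsk
    have hP : asc c 1 k = asc c 1 (k-1) * c k := by
      rw [show k = (k-1)+1 from by omega]
      show asc c 1 (k-1) * c (1 + (k-1)) = _
      rw [show 1 + (k-1) = (k-1)+1 from by omega, show (k-1)+1-1 = k-1 from by omega]
    rcases Nat.eq_zero_or_pos s with h0 | hpos
    · subst h0
      rw [pow_one, pow_one, hP]
      congr 1
      show c k = c ((k-1+1)+0) * 1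
      rw [mul_one, show (k-1+1)+0 = k from by omega]
    · have hstep := step c k hbraid hcomm s hpos (by omega)
      rw [pow_succ, ih hpos (by omega), pow_succ, hP,
        show k-(s+1)+1 = k-s from by omega, mul_assoc, mul_assoc, hstep, ← mul_assoc]

end

lemma list_asc (c : ℕ → G) : ∀ n, ((List.range n).map (fun i => c (i + 1))).prod = asc c 1 n := by
  intro n
  induction n with
  | zero => simp [asc]
  | succ n ih =>
    rw [List.range_succ, List.map_append, List.prod_append]
    show _ * (c (n+1) * 1) = asc c 1 n * c (1+n)
    rw [ih, mul_one, Nat.add_comm 1 n]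

lemma list_desc (c : ℕ → G) (k : ℕ) : ∀ s, s ≤ k →
    ((List.range s).map (fun i => c (k - i))).prod = desc c (k-s+1) s := by
  intro s
  induction s with
  | zero => intro _; simp [desc]
  | succ s ih =>
    intro hsk
    rw [List.range_succ, List.map_append, List.prod_append]
    show _ * (c (k-s) * 1) = desc c (k-(s+1)+1) (s+1)
    rw [ih (by omega), mul_one, show k-(s+1)+1 = k-s from by omega, desc_succ' c (k-s) s,
      show k-s+1 = (k-s)+1 from rfl]

end Stmt2Aux

/-- For `1 ≤ s ≤ k`: `(c1 c2 ⋯ ck)^s = (c1 c2 ⋯ c_{k-1})^s (ck c_{k-1} ⋯ c_{k-s+1})`. -/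
theorem stmt_2 {G : Type*} [Group G] (k : ℕ) (c : ℕ → G)
    (hbraid : ∀ i, 1 ≤ i → i + 1 ≤ k →
      c i * c (i + 1) * c i = c (i + 1) * c i * c (i + 1))
    (hcomm : ∀ i j, 1 ≤ i → j ≤ k → i + 1 < j → Commute (c i) (c j)) :
    ∀ s, 1 ≤ s → s ≤ k →
      ((List.range k).map (fun i => c (i + 1))).prod ^ s
        = ((List.range (k - 1)).map (fun i => c (i + 1))).prod ^ s
          * ((List.range s).map (fun i => c (k - i))).prod := by
  intro s hs hsk
  rw [Stmt2Aux.list_asc, Stmt2Aux.list_asc, Stmt2Aux.list_desc c k s hsk]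
  exact Stmt2Aux.main c k hbraid hcomm s hs hsk
end

section
/- Let b1, a1, e1, a2 be elements of a group such that each consecutive pair (b1,a1), (a1,e1), (e1,a2) satisfies the braid relation and each non-consecutive pair commutes. Set s = b1 a1 a1 b1 and t1 = e1 a1 a2 e1. Then s t1 s = b1 a1 e1 a2^2 e1 a1 b1 t1 = t1 b1 a1 e1 a2^2 e1 a1 b1, and consequently s t1 s t1 = t1 s t1 s. -/
/-- Relation (A6): with `s = b1 a1 a1 b1`, `t1 = e1 a1 a2 e1`,
`s t1 s = b1 a1 e1 a2² e1 a1 b1 t1 = t1 b1 a1 e1 a2² e1 a1 b1`, hence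
`s t1 s t1 = t1 s t1 s`. -/
theorem stmt_6 {G : Type*} [Group G] (b1 a1 e1 a2 : G)
    (hb1a1 : b1 * a1 * b1 = a1 * b1 * a1)
    (ha1e1 : a1 * e1 * a1 = e1 * a1 * e1)
    (he1a2 : e1 * a2 * e1 = a2 * e1 * a2)
    (hb1e1 : b1 * e1 = e1 * b1)
    (hb1a2 : b1 * a2 = a2 * b1)
    (ha1a2 : a1 * a2 = a2 * a1)
    (s t1 : G) (hs : s = b1 * a1 * a1 * b1) (ht1 : t1 = e1 * a1 * a2 * e1) :
    s * t1 * s = b1 * a1 * e1 * a2 ^ 2 * e1 * a1 * b1 * t1 ∧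
    b1 * a1 * e1 * a2 ^ 2 * e1 * a1 * b1 * t1
      = t1 * (b1 * a1 * e1 * a2 ^ 2 * e1 * a1 * b1) ∧
    s * t1 * s * t1 = t1 * s * t1 * s := by
  have lift3 : ∀ x y z u v w : G, x * y * z = u * v * w →
      ∀ g : G, x * (y * (z * g)) = u * (v * (w * g)) := by
    intro x y z u v w h g
    rw [← mul_assoc, ← mul_assoc, h, mul_assoc, mul_assoc]
  have lift3e : ∀ x y z u v w : G, x * y * z = u * v * w →
      x * (y * z) = u * (v * w) := by
    intro x y z u v w h
    rw [← mul_assoc, h, mul_assoc]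
  have lift2 : ∀ x y : G, x * y = y * x → ∀ g : G, x * (y * g) = y * (x * g) := by
    intro x y h g
    rw [← mul_assoc, h, mul_assoc]
  have Hba_g := lift3 _ _ _ _ _ _ hb1a1
  have Hae_g := lift3 _ _ _ _ _ _ ha1e1
  have Hec_g := lift3 _ _ _ _ _ _ he1a2
  have Hba_e := lift3e _ _ _ _ _ _ hb1a1
  have Hae_e := lift3e _ _ _ _ _ _ ha1e1
  have Hec_e := lift3e _ _ _ _ _ _ he1a2
  have Cbe_g := lift2 _ _ hb1e1
  have Cbc_g := lift2 _ _ hb1a2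
  have Cac_g := lift2 _ _ ha1a2
  have Cbe_e := hb1e1
  have Cbc_e := hb1a2
  have Cac_e := ha1a2
  have h1 : s * t1 * s = b1 * a1 * e1 * a2 ^ 2 * e1 * a1 * b1 * t1 := by
    subst hs ht1
    simp only [pow_two, mul_assoc]
    conv_lhs => rw [Cbe_g, Cac_g, Cbc_g, ← Cbe_g, Hba_g, Hae_g, Hae_g, Cbe_g, Cbe_g,
      ← Cbe_e, Hba_g, ← Cac_g, Hae_g, Hec_g, Hec_g, ← Cac_g, ← Cbc_g, Cac_g, Cac_g,
      Hae_g, ← Cbe_g, ← Cac_g]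
  have h2 : b1 * a1 * e1 * a2 ^ 2 * e1 * a1 * b1 * t1
      = t1 * (b1 * a1 * e1 * a2 ^ 2 * e1 * a1 * b1) := by
    subst ht1
    simp only [pow_two, mul_assoc]
    conv_lhs => rw [Cbe_g, ← Hae_g, ← Hba_g, ← Cbe_g, Cbc_g, Cbe_e, Cac_g, ← Cac_g,
      ← Cbc_g, ← Hec_g, ← Hae_g, ← Cac_g, Hae_g, ← Cbc_g, ← Cbe_g, Hec_g, Cbe_g,
      Hba_g, Cac_g, Cbc_g, ← Cac_g, ← Cac_g, Hae_g, Cbe_g]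
  refine ⟨h1, h2, ?_⟩
  calc s * t1 * s * t1 = (b1 * a1 * e1 * a2 ^ 2 * e1 * a1 * b1 * t1) * t1 := by rw [h1]
    _ = t1 * (b1 * a1 * e1 * a2 ^ 2 * e1 * a1 * b1) * t1 := by rw [h2]
    _ = t1 * (b1 * a1 * e1 * a2 ^ 2 * e1 * a1 * b1 * t1) := by
        simp only [mul_assoc]
    _ = t1 * (s * t1 * s) := by rw [h1]
    _ = t1 * s * t1 * s := by simp only [mul_assoc]
end

section
/- Under relations (M1) and (M2), with d_{1,2} = b1^{-1} a1^{-1} e1^{-1} a2^{-1} b2 a2 e1 a1 b1 and s = b1 a1 a1 b1, one has: d_{1,2} b1 d_{1,2}^{-1} = b1^{-1} d_{1,2} b1 and [d_{1,2}, a1] = [d_{1,2}, a2] = [d_{1,2}, e1] = 1; consequently [b1, d_{1,2} s d_{1,2}] = 1 and [s, d_{1,2} s d_{1,2}] = 1. -/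
/-- Relations (A2) and (A14): under (M1), with `s = b1 a1 a1 b1` and
`d₁₂ = b1⁻¹ a1⁻¹ e1⁻¹ a2⁻¹ b2 a2 e1 a1 b1`:
`d₁₂ b1 d₁₂⁻¹ = b1⁻¹ d₁₂ b1`, `d₁₂` commutes with `a1, a2, e1`, and consequently
`[b1, d₁₂ s d₁₂] = 1` and `[s, d₁₂ s d₁₂] = 1`. -/
theorem stmt_11 {G : Type*} [Group G] (b2 b1 a1 e1 a2 : G)
    (hb2a2 : b2 * a2 * b2 = a2 * b2 * a2)
    (hb1a1 : b1 * a1 * b1 = a1 * b1 * a1)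
    (ha1e1 : a1 * e1 * a1 = e1 * a1 * e1)
    (he1a2 : e1 * a2 * e1 = a2 * e1 * a2)
    (hb2b1 : b2 * b1 = b1 * b2)
    (hb2a1 : b2 * a1 = a1 * b2)
    (hb2e1 : b2 * e1 = e1 * b2)
    (hb1e1 : b1 * e1 = e1 * b1)
    (hb1a2 : b1 * a2 = a2 * b1)
    (ha1a2 : a1 * a2 = a2 * a1)
    (s d12 : G)
    (hs : s = b1 * a1 * a1 * b1)
    (hd12 : d12 = b1⁻¹ * a1⁻¹ * e1⁻¹ * a2⁻¹ * b2 * a2 * e1 * a1 * b1) :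
    d12 * b1 * d12⁻¹ = b1⁻¹ * d12 * b1 ∧
    d12 * a1 = a1 * d12 ∧
    d12 * a2 = a2 * d12 ∧
    d12 * e1 = e1 * d12 ∧
    b1 * (d12 * s * d12) = (d12 * s * d12) * b1 ∧
    s * (d12 * s * d12) = (d12 * s * d12) * s := by
  -- pattern (right-associated) versions of the relations
  have pb2b1 : ∀ x : G, b2 * (b1 * x) = b1 * (b2 * x) := fun x => by
    simp only [← mul_assoc]; rw [hb2b1]
  have pb2a1 : ∀ x : G, b2 * (a1 * x) = a1 * (b2 * x) := fun x => by
    simp only [← mul_assoc]; rw [hb2a1]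
  have pb2e1 : ∀ x : G, b2 * (e1 * x) = e1 * (b2 * x) := fun x => by
    simp only [← mul_assoc]; rw [hb2e1]
  have pb1e1 : ∀ x : G, b1 * (e1 * x) = e1 * (b1 * x) := fun x => by
    simp only [← mul_assoc]; rw [hb1e1]
  have pb1a2 : ∀ x : G, b1 * (a2 * x) = a2 * (b1 * x) := fun x => by
    simp only [← mul_assoc]; rw [hb1a2]
  have pa1a2 : ∀ x : G, a1 * (a2 * x) = a2 * (a1 * x) := fun x => by
    simp only [← mul_assoc]; rw [ha1a2]
  have pb1a1 : ∀ x : G, b1 * (a1 * (b1 * x)) = a1 * (b1 * (a1 * x)) := fun x => by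
    simp only [← mul_assoc]; rw [hb1a1]
  have pa1e1 : ∀ x : G, a1 * (e1 * (a1 * x)) = e1 * (a1 * (e1 * x)) := fun x => by
    simp only [← mul_assoc]; rw [ha1e1]
  have pe1a2 : ∀ x : G, e1 * (a2 * (e1 * x)) = a2 * (e1 * (a2 * x)) := fun x => by
    simp only [← mul_assoc]; rw [he1a2]
  have rb1a1 : b1 * (a1 * b1) = a1 * (b1 * a1) := by
    simp only [← mul_assoc]; exact hb1a1
  have rb2a2 : b2 * (a2 * b2) = a2 * (b2 * a2) := by
    simp only [← mul_assoc]; exact hb2a2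
  -- auxiliary elements
  obtain ⟨y, hy⟩ : ∃ y : G, y = e1 * a1 * b1 := ⟨_, rfl⟩
  obtain ⟨z, hz⟩ : ∃ z : G, z = a2 * y := ⟨_, rfl⟩
  have hd : d12 = z⁻¹ * (b2 * z) := by rw [hd12, hz, hy]; group
  have swap : ∀ u a b : G, u * a = b * u → a * u⁻¹ = u⁻¹ * b := by
    intro u a b h
    refine mul_left_cancel (a := u) ?_
    rw [← mul_assoc, h]
    group
  -- conjugation by z
  have za1 : z * a1 = b1 * z := by
    rw [hz, hy]; simp only [mul_assoc]
    rw [← rb1a1, ← pb1e1, ← pb1a2]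
  have za2 : z * a2 = e1 * z := by
    rw [hz, hy]; simp only [mul_assoc]
    rw [hb1a2, pa1a2, ← pe1a2]
  have ze1 : z * e1 = a1 * z := by
    rw [hz, hy]; simp only [mul_assoc]
    rw [hb1e1, ← pa1e1, ← pa1a2]
  have yb2 : y * b2 = b2 * y := by
    rw [hy]; simp only [mul_assoc]
    rw [← hb2b1, ← pb2a1, ← pb2e1]
  have hyzb : y * (z * b1) = a2 * (y * z) := by
    rw [hz, hy]; simp only [mul_assoc]
    rw [pb1a2, pa1a2, pb1e1, pb1a1, pa1e1, ← pb1e1, pe1a2, ← pa1a2, ← pb1a2]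
  have ia1 : a1 * z⁻¹ = z⁻¹ * b1 := swap _ _ _ za1
  have ia2 : a2 * z⁻¹ = z⁻¹ * e1 := swap _ _ _ za2
  have ie1 : e1 * z⁻¹ = z⁻¹ * a1 := swap _ _ _ ze1
  have ib2y : b2 * y⁻¹ = y⁻¹ * b2 := swap _ _ _ yb2
  have zb1 : z * b1 = y⁻¹ * (a2 * (y * z)) := by
    refine mul_left_cancel (a := y) ?_
    rw [hyzb]; group
  have ib1z : b1 * z⁻¹ = z⁻¹ * (y⁻¹ * (a2 * y)) := by
    refine mul_left_cancel (a := z) ?_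
    rw [← mul_assoc, zb1]; group
  -- d12 commutes with a1, a2, e1
  have c1 : d12 * a1 = a1 * d12 := by
    rw [hd]
    calc z⁻¹ * (b2 * z) * a1 = z⁻¹ * (b2 * (z * a1)) := by group
      _ = z⁻¹ * (b2 * (b1 * z)) := by rw [za1]
      _ = z⁻¹ * (b1 * (b2 * z)) := by rw [pb2b1]
      _ = (z⁻¹ * b1) * (b2 * z) := by group
      _ = (a1 * z⁻¹) * (b2 * z) := by rw [ia1]
      _ = a1 * (z⁻¹ * (b2 * z)) := by group
  have c2 : d12 * a2 = a2 * d12 := by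
    rw [hd]
    calc z⁻¹ * (b2 * z) * a2 = z⁻¹ * (b2 * (z * a2)) := by group
      _ = z⁻¹ * (b2 * (e1 * z)) := by rw [za2]
      _ = z⁻¹ * (e1 * (b2 * z)) := by rw [pb2e1]
      _ = (z⁻¹ * e1) * (b2 * z) := by group
      _ = (a2 * z⁻¹) * (b2 * z) := by rw [ia2]
      _ = a2 * (z⁻¹ * (b2 * z)) := by group
  have c3 : d12 * e1 = e1 * d12 := by
    rw [hd]
    calc z⁻¹ * (b2 * z) * e1 = z⁻¹ * (b2 * (z * e1)) := by group
      _ = z⁻¹ * (b2 * (a1 * z)) := by rw [ze1]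
      _ = z⁻¹ * (a1 * (b2 * z)) := by rw [pb2a1]
      _ = (z⁻¹ * a1) * (b2 * z) := by group
      _ = (e1 * z⁻¹) * (b2 * z) := by rw [ie1]
      _ = e1 * (z⁻¹ * (b2 * z)) := by group
  -- the braid relation between d12 and b1
  have hL : d12 * (b1 * d12) = z⁻¹ * (y⁻¹ * ((a2 * (b2 * a2)) * (y * z))) := by
    rw [hd]
    calc z⁻¹ * (b2 * z) * (b1 * (z⁻¹ * (b2 * z)))
        = z⁻¹ * (b2 * ((z * b1) * (z⁻¹ * (b2 * z)))) := by group
      _ = z⁻¹ * (b2 * ((y⁻¹ * (a2 * (y * z))) * (z⁻¹ * (b2 * z)))) := by rw [zb1]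
      _ = z⁻¹ * ((b2 * y⁻¹) * (a2 * ((y * b2) * z))) := by group
      _ = z⁻¹ * ((y⁻¹ * b2) * (a2 * ((y * b2) * z))) := by rw [ib2y]
      _ = z⁻¹ * ((y⁻¹ * b2) * (a2 * ((b2 * y) * z))) := by rw [yb2]
      _ = z⁻¹ * (y⁻¹ * ((b2 * (a2 * b2)) * (y * z))) := by group
      _ = z⁻¹ * (y⁻¹ * ((a2 * (b2 * a2)) * (y * z))) := by rw [rb2a2]
  have hR : b1 * (d12 * b1) = z⁻¹ * (y⁻¹ * ((a2 * (b2 * a2)) * (y * z))) := by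
    rw [hd]
    calc b1 * (z⁻¹ * (b2 * z) * b1)
        = (b1 * z⁻¹) * (b2 * (z * b1)) := by group
      _ = (z⁻¹ * (y⁻¹ * (a2 * y))) * (b2 * (z * b1)) := by rw [ib1z]
      _ = (z⁻¹ * (y⁻¹ * (a2 * y))) * (b2 * (y⁻¹ * (a2 * (y * z)))) := by rw [zb1]
      _ = z⁻¹ * (y⁻¹ * (a2 * (y * ((b2 * y⁻¹) * (a2 * (y * z)))))) := by group
      _ = z⁻¹ * (y⁻¹ * (a2 * (y * ((y⁻¹ * b2) * (a2 * (y * z)))))) := by rw [ib2y]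
      _ = z⁻¹ * (y⁻¹ * ((a2 * (b2 * a2)) * (y * z))) := by group
  have braid : d12 * (b1 * d12) = b1 * (d12 * b1) := hL.trans hR.symm
  -- (A2): d12 b1 d12⁻¹ = b1⁻¹ d12 b1
  have rel1 : d12 * b1 * d12⁻¹ = b1⁻¹ * d12 * b1 := by
    calc d12 * b1 * d12⁻¹ = b1⁻¹ * ((b1 * (d12 * b1)) * d12⁻¹) := by group
      _ = b1⁻¹ * ((d12 * (b1 * d12)) * d12⁻¹) := by rw [braid]
      _ = b1⁻¹ * d12 * b1 := by group
  -- d12 commutes with a1*a1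
  have hda : d12 * (a1 * a1) = (a1 * a1) * d12 := by
    calc d12 * (a1 * a1) = (d12 * a1) * a1 := by group
      _ = (a1 * d12) * a1 := by rw [c1]
      _ = a1 * (d12 * a1) := by group
      _ = a1 * (a1 * d12) := by rw [c1]
      _ = (a1 * a1) * d12 := by group
  -- b1 commutes with d12 * s * d12 (expanded form)
  have g5x : b1 * (d12 * (b1 * a1 * a1 * b1) * d12) = d12 * (b1 * a1 * a1 * b1) * d12 * b1 := by
    calc b1 * (d12 * (b1 * a1 * a1 * b1) * d12)
        = (b1 * (d12 * b1)) * ((a1 * a1) * (b1 * d12)) := by group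
      _ = (d12 * (b1 * d12)) * ((a1 * a1) * (b1 * d12)) := by rw [braid]
      _ = (d12 * b1) * ((d12 * (a1 * a1)) * (b1 * d12)) := by group
      _ = (d12 * b1) * (((a1 * a1) * d12) * (b1 * d12)) := by rw [hda]
      _ = (d12 * (b1 * (a1 * a1))) * (d12 * (b1 * d12)) := by group
      _ = (d12 * (b1 * (a1 * a1))) * (b1 * (d12 * b1)) := by rw [braid]
      _ = d12 * (b1 * a1 * a1 * b1) * d12 * b1 := by group
  have g5 : b1 * (d12 * s * d12) = (d12 * s * d12) * b1 := by
    rw [hs]; exact g5x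
  -- a1*a1 commutes with s
  have haas : (a1 * a1) * (b1 * a1 * a1 * b1) = (b1 * a1 * a1 * b1) * (a1 * a1) := by
    calc (a1 * a1) * (b1 * a1 * a1 * b1)
        = a1 * (a1 * b1 * a1) * (a1 * b1) := by group
      _ = a1 * (b1 * a1 * b1) * (a1 * b1) := by rw [hb1a1]
      _ = (a1 * b1 * a1) * (b1 * a1 * b1) := by group
      _ = (a1 * b1 * a1) * (a1 * b1 * a1) := by rw [hb1a1]
      _ = (b1 * a1 * b1) * (a1 * b1 * a1) := by rw [hb1a1]
      _ = b1 * a1 * (b1 * a1 * b1) * a1 := by group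
      _ = b1 * a1 * (a1 * b1 * a1) * a1 := by rw [hb1a1]
      _ = (b1 * a1 * a1 * b1) * (a1 * a1) := by group
  -- a1*a1 commutes with d12 * s * d12 (expanded form)
  have taax : (a1 * a1) * (d12 * (b1 * a1 * a1 * b1) * d12)
      = (d12 * (b1 * a1 * a1 * b1) * d12) * (a1 * a1) := by
    calc (a1 * a1) * (d12 * (b1 * a1 * a1 * b1) * d12)
        = ((a1 * a1) * d12) * ((b1 * a1 * a1 * b1) * d12) := by group
      _ = (d12 * (a1 * a1)) * ((b1 * a1 * a1 * b1) * d12) := by rw [← hda]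
      _ = d12 * (((a1 * a1) * (b1 * a1 * a1 * b1)) * d12) := by group
      _ = d12 * (((b1 * a1 * a1 * b1) * (a1 * a1)) * d12) := by rw [haas]
      _ = (d12 * (b1 * a1 * a1 * b1)) * ((a1 * a1) * d12) := by group
      _ = (d12 * (b1 * a1 * a1 * b1)) * (d12 * (a1 * a1)) := by rw [← hda]
      _ = (d12 * (b1 * a1 * a1 * b1) * d12) * (a1 * a1) := by group
  have g6 : s * (d12 * s * d12) = (d12 * s * d12) * s := by
    rw [hs]
    calc (b1 * a1 * a1 * b1) * (d12 * (b1 * a1 * a1 * b1) * d12)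
        = b1 * ((a1 * a1) * (b1 * (d12 * (b1 * a1 * a1 * b1) * d12))) := by group
      _ = b1 * ((a1 * a1) * ((d12 * (b1 * a1 * a1 * b1) * d12) * b1)) := by rw [g5x]
      _ = b1 * (((a1 * a1) * (d12 * (b1 * a1 * a1 * b1) * d12)) * b1) := by group
      _ = b1 * (((d12 * (b1 * a1 * a1 * b1) * d12) * (a1 * a1)) * b1) := by rw [taax]
      _ = (b1 * (d12 * (b1 * a1 * a1 * b1) * d12)) * ((a1 * a1) * b1) := by group
      _ = ((d12 * (b1 * a1 * a1 * b1) * d12) * b1) * ((a1 * a1) * b1) := by rw [g5x]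
      _ = (d12 * (b1 * a1 * a1 * b1) * d12) * (b1 * a1 * a1 * b1) := by group
  exact ⟨rel1, c1, c2, c3, g5, g6⟩
end

section
/- Let a, b ∈ Z × Z with a = (1, 0), and let β = (p, m), γ = (c, d), α' = (x, y) be integer vectors with m ≥ 2 representing homology classes, such that |x m - y p| = 1, |c m - d p| = 1, |y| < m, |d| ≤ m. Then |x d - y c| ≤ 1; i.e. the algebraic intersection number of α' and γ (given by the determinant) is 0 or ±1. -/
/-- Homology computation on the torus: if `|x m - y p| = 1`, `|c m - d p| = 1`,
`|y| < m`, `|d| ≤ m` with `m ≥ 2`, then `|x d - y c| ≤ 1`. -/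
theorem stmt_13 (m x y p c d : ℤ) (hm : 2 ≤ m)
    (h1 : |x * m - y * p| = 1)
    (h2 : |c * m - d * p| = 1)
    (hy : |y| < m)
    (hd : |d| ≤ m) :
    |x * d - y * c| ≤ 1 := by
  have key : |x * d - y * c| * m < 2 * m := by
    have heq : (x * d - y * c) * m = d * (x * m - y * p) - y * (c * m - d * p) := by ring
    calc |x * d - y * c| * m = |(x * d - y * c) * m| := by
          rw [abs_mul, abs_of_nonneg (by linarith : (0:ℤ) ≤ m)]
      _ = |d * (x * m - y * p) - y * (c * m - d * p)| := by rw [heq]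
      _ ≤ |d| * |x * m - y * p| + |y| * |c * m - d * p| := by
          calc _ ≤ |d * (x * m - y * p)| + |y * (c * m - d * p)| := abs_sub _ _
            _ = _ := by rw [abs_mul, abs_mul]
      _ = |d| + |y| := by rw [h1, h2]; ring
      _ < 2 * m := by linarith
  have := lt_of_mul_lt_mul_right (by linarith : |x * d - y * c| * m < 2 * m) (by linarith : (0:ℤ) ≤ m)
  linarith
end

section
/- The pure braid group presentation transformation: the standard pure braid relations (i)–(iv) on generators a_{r,s} (r < s) are equivalent to the relations (a)–(d): (a) a_{r,s} a_{i,j} a_{r,s}^{-1} = a_{i,j} if r<s<i<j or i<r<s<j; (b) a_{r,s}^{-1} a_{s,j} a_{r,s} = (a_{r,j} a_{s,j} a_{r,j}^{-1}) for r<s<j; (c) a_{r,j}^{-1} a_{r,s} a_{r,j} = a_{s,j} a_{r,s} a_{s,j}^{-1} for r<s<j; (d) [a_{i,j}, a_{r,j}^{-1} a_{r,s} a_{r,j}] = 1 for r<i<s<j. In particular, relations (iii) and (iv) of the standard presentation follow from (a), (b), (c), (d), and conversely. -/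
/-!
Write `x = a r s`, `y = a r j`, `z = a s j`. Relation (ii), `x⁻¹ z x = y z y⁻¹`, gives
`⁅y, z⁆ = x⁻¹ (z x z⁻¹)`, while `⁅x⁻¹, y⁻¹⁆ = x⁻¹ (y⁻¹ x y)`; so (iii) is (c). Substituting the
first identity into (iv) and cancelling the conjugation by `x⁻¹` turns (iv) into the statement that
`a i j` commutes with `z x z⁻¹`, which by (c) is `y⁻¹ x y`: this is (d).
-/

open scoped commutatorElement

section

variable {G : Type*} [Group G]

theorem commutatorElement_eq_inv_mul_conj {x y z : G} (h : x⁻¹ * z * x = y * z * y⁻¹) :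
    ⁅y, z⁆ = x⁻¹ * (z * x * z⁻¹) := by
  rw [commutatorElement_def, ← h]
  group

theorem conj_eq_conj_inv_mul_iff_commutatorElement_eq_one (x u w : G) :
    x⁻¹ * w * x = x⁻¹ * u * w * (x⁻¹ * u)⁻¹ ↔ ⁅w, u⁆ = 1 := by
  have hconj : x⁻¹ * u * w * (x⁻¹ * u)⁻¹ = x⁻¹ * (u * w * u⁻¹) * x := by group
  rw [hconj, mul_left_inj, mul_right_inj, eq_mul_inv_iff_mul_eq,
    commutatorElement_eq_one_iff_mul_comm]

theorem commutatorElement_eq_iff_of_conj_eq {x y z : G} (h : x⁻¹ * z * x = y * z * y⁻¹) :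
    ⁅y, z⁆ = ⁅x⁻¹, y⁻¹⁆ ↔ y⁻¹ * x * y = z * x * z⁻¹ := by
  have hxy : ⁅x⁻¹, y⁻¹⁆ = x⁻¹ * (y⁻¹ * x * y) := by
    rw [commutatorElement_def]
    group
  rw [commutatorElement_eq_inv_mul_conj h, hxy, mul_right_inj, eq_comm]

theorem conj_eq_commutatorElement_conj_iff_of_conj_eq {x y z : G}
    (h : x⁻¹ * z * x = y * z * y⁻¹) (hc : y⁻¹ * x * y = z * x * z⁻¹) (w : G) :
    x⁻¹ * w * x = ⁅y, z⁆ * w * ⁅y, z⁆⁻¹ ↔ ⁅w, y⁻¹ * x * y⁆ = 1 := by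
  rw [commutatorElement_eq_inv_mul_conj h, ← hc,
    conj_eq_conj_inv_mul_iff_commutatorElement_eq_one]

end

/-- Equivalence of the standard pure braid relations (i)–(iv) with the
relations (a)–(d) of Lemma 3.4, for elements `a i j` (`1 ≤ i < j ≤ n`) of an
arbitrary group. -/
theorem stmt_19 {G : Type*} [Group G] (n : ℕ) (a : ℕ → ℕ → G) :
    -- standard presentation relations (i)-(iv)
    ((∀ r s i j, 1 ≤ r → j ≤ n → 1 ≤ i →
        (r < s ∧ s < i ∧ i < j ∨ i < r ∧ r < s ∧ s < j) →
        (a r s)⁻¹ * a i j * a r s = a i j) ∧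
     (∀ r s j, 1 ≤ r → r < s → s < j → j ≤ n →
        (a r s)⁻¹ * a s j * a r s = a r j * a s j * (a r j)⁻¹) ∧
     (∀ r s j, 1 ≤ r → r < s → s < j → j ≤ n →
        ⁅a r j, a s j⁆ = ⁅(a r s)⁻¹, (a r j)⁻¹⁆) ∧
     (∀ r i s j, 1 ≤ r → r < i → i < s → s < j → j ≤ n →
        (a r s)⁻¹ * a i j * a r s
          = ⁅a r j, a s j⁆ * a i j * ⁅a r j, a s j⁆⁻¹))
    ↔
    -- relations (a)-(d)
    ((∀ r s i j, 1 ≤ r → j ≤ n → 1 ≤ i →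
        (r < s ∧ s < i ∧ i < j ∨ i < r ∧ r < s ∧ s < j) →
        (a r s)⁻¹ * a i j * a r s = a i j) ∧
     (∀ r s j, 1 ≤ r → r < s → s < j → j ≤ n →
        (a r s)⁻¹ * a s j * a r s = a r j * a s j * (a r j)⁻¹) ∧
     (∀ r s j, 1 ≤ r → r < s → s < j → j ≤ n →
        (a r j)⁻¹ * a r s * a r j = a s j * a r s * (a s j)⁻¹) ∧
     (∀ r i s j, 1 ≤ r → r < i → i < s → s < j → j ≤ n →
        ⁅a i j, (a r j)⁻¹ * a r s * a r j⁆ = 1)) := by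
  refine and_congr_right fun _ => and_congr_right fun h2 => ?_
  have hiii_iff_c : ∀ r s j (hr : 1 ≤ r) (hrs : r < s) (hsj : s < j) (hjn : j ≤ n),
      ⁅a r j, a s j⁆ = ⁅(a r s)⁻¹, (a r j)⁻¹⁆ ↔
        (a r j)⁻¹ * a r s * a r j = a s j * a r s * (a s j)⁻¹ :=
    fun r s j hr hrs hsj hjn => commutatorElement_eq_iff_of_conj_eq (h2 r s j hr hrs hsj hjn)
  constructor
  · rintro ⟨h3, h4⟩
    have hc r s j hr hrs hsj hjn := (hiii_iff_c r s j hr hrs hsj hjn).1 (h3 r s j hr hrs hsj hjn)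
    refine ⟨hc, fun r i s j hr hri his hsj hjn => ?_⟩
    have hrs := hri.trans his
    exact (conj_eq_commutatorElement_conj_iff_of_conj_eq (h2 r s j hr hrs hsj hjn)
      (hc r s j hr hrs hsj hjn) _).1 (h4 r i s j hr hri his hsj hjn)
  · rintro ⟨hc, hd⟩
    refine ⟨fun r s j hr hrs hsj hjn => (hiii_iff_c r s j hr hrs hsj hjn).2
      (hc r s j hr hrs hsj hjn), fun r i s j hr hri his hsj hjn => ?_⟩
    have hrs := hri.trans his
    exact (conj_eq_commutatorElement_conj_iff_of_conj_eq (h2 r s j hr hrs hsj hjn)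
      (hc r s j hr hrs hsj hjn) _).2 (hd r i s j hr hri his hsj hjn)
end
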